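/- Let (V,g) be a 4-dimensional Lorentzian vector space and Ψ : V → ℝ³ linear with component functionals Ψ¹,Ψ²,Ψ³ ∈ V*. If the covector Hodge dual ⋆(Ψ¹∧Ψ²∧Ψ³) is isotropic (its g⁻¹-square norm is zero) then the restriction of g to ker Ψ is degenerate or Ψ is not surjective; equivalently, if Ψ is surjective and ker Ψ is either timelike or spacelike, then the family (⋆(Ψ¹∧Ψ²∧Ψ³), Ψ¹, Ψ², Ψ³) is a basis of V*. -/

import Mathlib

/-! A nonzero vector `n ∈ ker Ψ` is `g`-orthogonal to the sharps `(Ψⁱ)^♯`, and `g n n ≠ 0` since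
`ker Ψ` is definite, so `((Ψ¹)^♯, (Ψ²)^♯, (Ψ³)^♯, n)` is a basis of `V`. Hence
`⋆(Ψ¹∧Ψ²∧Ψ³)(n) = vol((Ψ¹)^♯, (Ψ²)^♯, (Ψ³)^♯, n) ≠ 0`, while every `Ψⁱ` vanishes at `n`;
so `⋆(Ψ¹∧Ψ²∧Ψ³)` lies outside the span of the independent `Ψⁱ`. -/

open Module

theorem notMem_span_range_of_map_eq_zero {R M N ι : Type*} [Semiring R] [AddCommMonoid M]
    [Module R M] [AddCommMonoid N] [Module R N] {v : ι → M} {x : M} (f : M →ₗ[R] N)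
    (hv : ∀ i, f (v i) = 0) (hx : f x ≠ 0) : x ∉ Submodule.span R (Set.range v) := fun h =>
  hx ((Submodule.span_le (p := LinearMap.ker f)).mpr (Set.range_subset_iff.mpr hv) h)

theorem linearIndependent_dualMap_proj {R V ι : Type*} [CommRing R] [AddCommGroup V]
    [Module R V] [Finite ι] {Ψ : V →ₗ[R] (ι → R)} (hΨ : Function.Surjective Ψ) :
    LinearIndependent R fun i => Ψ.dualMap (LinearMap.proj i) := by
  classical
  have hproj : ((Pi.basisFun R ι).dualBasis : ι → Dual R (ι → R)) = LinearMap.proj := by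
    ext i j
    simp
  exact hproj ▸ (Pi.basisFun R ι).dualBasis.linearIndependent.map' _
    (LinearMap.ker_eq_bot.mpr (LinearMap.dualMap_injective_of_surjective hΨ))

theorem linearIndependent_finSnoc_of_orthogonal {K V : Type*} [Field K] [AddCommGroup V]
    [Module K V] (B : V →ₗ[K] V →ₗ[K] K) {n : ℕ} {v : Fin n → V} (hv : LinearIndependent K v)
    {x : V} (hvx : ∀ i, B (v i) x = 0) (hx : B x x ≠ 0) :
    LinearIndependent K (Fin.snoc v x : Fin (n + 1) → V) :=
  linearIndependent_finSnoc.mpr ⟨hv, notMem_span_range_of_map_eq_zero (B.flip x) hvx hx⟩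

theorem AlternatingMap.map_ne_zero_of_linearIndependent {K V ι : Type*} [Field K]
    [AddCommGroup V] [Module K V] [FiniteDimensional K V] [Fintype ι] {f : V [⋀^ι]→ₗ[K] K}
    (hf : f ≠ 0) {v : ι → V} (hv : LinearIndependent K v)
    (hcard : Fintype.card ι = finrank K V) : f v ≠ 0 := by
  have := (f.map_basis_ne_zero_iff
    (Basis.mk hv (hv.span_eq_top_of_card_eq_finrank' hcard).ge)).mpr hf
  rwa [Basis.coe_mk] at this

theorem stmt7_general {V : Type*} [AddCommGroup V] [Module ℝ V]
    (g : V →ₗ[ℝ] V →ₗ[ℝ] ℝ)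
    (b : Module.Basis (Fin 4) ℝ V)
    (gs : Module.Dual ℝ V →ₗ[ℝ] V)
    (hgs2 : ∀ α : Module.Dual ℝ V, g (gs α) = α)
    (vol : V [⋀^Fin 4]→ₗ[ℝ] ℝ) (hvol : vol (fun i => b i) = 1)
    (Ψ : V →ₗ[ℝ] (Fin 3 → ℝ)) (hΨ : Function.Surjective Ψ)
    (hker : (∀ X ∈ LinearMap.ker Ψ, X ≠ 0 → g X X < 0) ∨
      (∀ X ∈ LinearMap.ker Ψ, X ≠ 0 → 0 < g X X))
    (σ : Module.Dual ℝ V)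
    (hσ : ∀ X : V, σ X =
      vol ![gs (Ψ.dualMap (LinearMap.proj 0)), gs (Ψ.dualMap (LinearMap.proj 1)),
        gs (Ψ.dualMap (LinearMap.proj 2)), X]) :
    LinearIndependent ℝ
        (Fin.cons σ (fun I => Ψ.dualMap (LinearMap.proj I)) : Fin 4 → Module.Dual ℝ V) ∧
      Submodule.span ℝ
        (Set.range
          (Fin.cons σ (fun I => Ψ.dualMap (LinearMap.proj I)) : Fin 4 → Module.Dual ℝ V)) =
        ⊤ := by
  have : FiniteDimensional ℝ V := Module.Finite.of_basis b
  have hfinrank : finrank ℝ V = 4 := by simpa using finrank_eq_card_basis b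
  set Ψd : Fin 3 → Dual ℝ V := fun I => Ψ.dualMap (LinearMap.proj I)
  have hΨd : LinearIndependent ℝ Ψd := linearIndependent_dualMap_proj hΨ
  obtain ⟨n, hn, hn0⟩ := Submodule.exists_mem_ne_zero_of_ne_bot
    (LinearMap.ker_ne_bot_of_finrank_lt (f := Ψ) (by simp [hfinrank]))
  have hΨdn : ∀ I, Ψd I n = 0 := fun I => by simp [Ψd, LinearMap.mem_ker.mp hn]
  have hgn : g n n ≠ 0 := hker.elim (fun h => (h n hn hn0).ne) (fun h => (h n hn hn0).ne')
  have hframe : LinearIndependent ℝ (Fin.snoc (gs ∘ Ψd) n : Fin 4 → V) :=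
    linearIndependent_finSnoc_of_orthogonal g
      (hΨd.map' gs (LinearMap.ker_eq_bot.mpr (Function.LeftInverse.injective hgs2)))
      (by simpa [hgs2] using hΨdn) hgn
  have hσn : σ n ≠ 0 := by
    rw [hσ n, show ![gs (Ψd 0), gs (Ψd 1), gs (Ψd 2), n] = Fin.snoc (gs ∘ Ψd) n by
      ext i; fin_cases i <;> rfl]
    exact AlternatingMap.map_ne_zero_of_linearIndependent (by rintro rfl; simp at hvol) hframe
      (by simp [hfinrank])
  have hLI : LinearIndependent ℝ (Fin.cons σ Ψd : Fin 4 → Dual ℝ V) :=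
    linearIndependent_finCons.mpr
      ⟨hΨd, notMem_span_range_of_map_eq_zero (Dual.eval ℝ V n) hΨdn hσn⟩
  exact ⟨hLI,
    hLI.span_eq_top_of_card_eq_finrank' (by simp [Subspace.dual_finrank_eq, hfinrank])⟩

/-- If `Ψ : V → ℝ³` is a surjective linear map whose kernel is timelike or
spacelike, then `(⋆(Ψ¹∧Ψ²∧Ψ³), Ψ¹, Ψ², Ψ³)` is a basis of `V*`, where the Hodge dual
covector `σ = ⋆(Ψ¹∧Ψ²∧Ψ³)` is characterized by `σ(X) = vol(Ψ¹^♯, Ψ²^♯, Ψ³^♯, X)`. -/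
theorem stmt7 {V : Type*} [AddCommGroup V] [Module ℝ V]
    (g : V →ₗ[ℝ] V →ₗ[ℝ] ℝ)
    (b : Module.Basis (Fin 4) ℝ V)
    (hb : ∀ i j, g (b i) (b j) = if i = j then (if i = 0 then (-1 : ℝ) else 1) else 0)
    (gs : Module.Dual ℝ V →ₗ[ℝ] V)
    (hgs1 : ∀ X : V, gs (g X) = X)
    (hgs2 : ∀ α : Module.Dual ℝ V, g (gs α) = α)
    (vol : V [⋀^Fin 4]→ₗ[ℝ] ℝ) (hvol : vol (fun i => b i) = 1)
    (Ψ : V →ₗ[ℝ] (Fin 3 → ℝ)) (hΨ : Function.Surjective Ψ)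
    (hker : (∀ X ∈ LinearMap.ker Ψ, X ≠ 0 → g X X < 0) ∨
      (∀ X ∈ LinearMap.ker Ψ, X ≠ 0 → 0 < g X X))
    (σ : Module.Dual ℝ V)
    (hσ : ∀ X : V, σ X =
      vol ![gs (Ψ.dualMap (LinearMap.proj 0)), gs (Ψ.dualMap (LinearMap.proj 1)),
        gs (Ψ.dualMap (LinearMap.proj 2)), X]) :
    LinearIndependent ℝ
        (Fin.cons σ (fun I => Ψ.dualMap (LinearMap.proj I)) : Fin 4 → Module.Dual ℝ V) ∧
      Submodule.span ℝ
        (Set.range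
          (Fin.cons σ (fun I => Ψ.dualMap (LinearMap.proj I)) : Fin 4 → Module.Dual ℝ V)) =
        ⊤ :=
  stmt7_general g b gs hgs2 vol hvol Ψ hΨ hker σ hσ
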